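/- arXiv:2112.13239 — 4 statements merged into one kernel-verified Lean document; each statement's English description precedes it below -/
import Mathlib

section
/- Let θ ∈ (0, π/4], μ = arctan(sin 2θ), and α = 2cos(2θ)/√(1+sin²(2θ)). With the ideal observables A_0 = σ_Z, A_1 = σ_X acting on the first qubit and B_0 = cos(μ)σ_Z + sin(μ)σ_X, B_1 = cos(μ)σ_Z − sin(μ)σ_X acting on the second qubit of ℂ²⊗ℂ², define the Bell operators W_0 = α A_0⊗I + A_0⊗B_0 + A_0⊗B_1 + A_1⊗B_0 − A_1⊗B_1, W_1 = −α A_0⊗I + A_0⊗B_0 + A_0⊗B_1 − A_1⊗B_0 + A_1⊗B_1, W_2 = −W_1, and W_3 = −W_0. Then for every b ∈ {0,1,2,3}, ⟨Bell^b_θ| W_b |Bell^b_θ⟩ = √(8+2α²). -/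
/-!
Expanding in the computational basis, each tilted Bell state gives the same value
`α cos 2θ + 2 cos μ + 2 sin μ sin 2θ` on its Bell operator. Writing `s = sin 2θ`, `c = cos 2θ`,
`q = √(1 + s²)`, we have `cos μ = 1/q`, `sin μ = s/q` and `α = 2c/q`, so this value is
`2(c² + 1 + s²)/q = 4/q`, while `8 + 2α² = 8(1 + s² + c²)/q² = (4/q)²`.
-/

open scoped BigOperators Kronecker
open Matrix

noncomputable section

/-- Pauli `σ_Z`. -/
def sZ : Matrix (Fin 2) (Fin 2) ℂ := !![1, 0; 0, -1]

/-- Pauli `σ_X`. -/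
def sX : Matrix (Fin 2) (Fin 2) ℂ := !![0, 1; 1, 0]

/-- The ideal second-party observables `B_0 = cos μ σ_Z + sin μ σ_X` and
`B_1 = cos μ σ_Z - sin μ σ_X`. -/
def Bobs (μ : ℝ) (b : Fin 2) : Matrix (Fin 2) (Fin 2) ℂ :=
  if b = 0 then (Real.cos μ : ℂ) • sZ + (Real.sin μ : ℂ) • sX
  else (Real.cos μ : ℂ) • sZ - (Real.sin μ : ℂ) • sX

/-- The four tilted Bell operators `W_0, W_1, W_2 = -W_1, W_3 = -W_0` built from
`A_0 = σ_Z`, `A_1 = σ_X`, `B_0`, `B_1`. -/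
def Wop (α μ : ℝ) (b : Fin 4) : Matrix (Fin 2 × Fin 2) (Fin 2 × Fin 2) ℂ :=
  if b = 0 then
    (α : ℂ) • (sZ ⊗ₖ 1) + sZ ⊗ₖ Bobs μ 0 + sZ ⊗ₖ Bobs μ 1 + sX ⊗ₖ Bobs μ 0 - sX ⊗ₖ Bobs μ 1
  else if b = 1 then
    -((α : ℂ) • (sZ ⊗ₖ 1)) + sZ ⊗ₖ Bobs μ 0 + sZ ⊗ₖ Bobs μ 1 - sX ⊗ₖ Bobs μ 0 + sX ⊗ₖ Bobs μ 1
  else if b = 2 then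
    -(-((α : ℂ) • (sZ ⊗ₖ 1)) + sZ ⊗ₖ Bobs μ 0 + sZ ⊗ₖ Bobs μ 1 - sX ⊗ₖ Bobs μ 0 +
        sX ⊗ₖ Bobs μ 1)
  else
    -((α : ℂ) • (sZ ⊗ₖ 1) + sZ ⊗ₖ Bobs μ 0 + sZ ⊗ₖ Bobs μ 1 + sX ⊗ₖ Bobs μ 0 - sX ⊗ₖ Bobs μ 1)

/-- The four tilted Bell states. -/
def bellV (θ : ℝ) (b : Fin 4) : Fin 2 × Fin 2 → ℂ :=
  fun p =>
    if b = 0 then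
      (if p = (0, 0) then (Real.cos θ : ℂ) else if p = (1, 1) then (Real.sin θ : ℂ) else 0)
    else if b = 1 then
      (if p = (0, 0) then (Real.sin θ : ℂ) else if p = (1, 1) then -(Real.cos θ : ℂ) else 0)
    else if b = 2 then
      (if p = (0, 1) then (Real.cos θ : ℂ) else if p = (1, 0) then (Real.sin θ : ℂ) else 0)
    else
      (if p = (0, 1) then (Real.sin θ : ℂ) else if p = (1, 0) then -(Real.cos θ : ℂ) else 0)

theorem star_bellV_dotProduct_Wop_mulVec (θ μ α : ℝ) (b : Fin 4) :
    star (bellV θ b) ⬝ᵥ (Wop α μ b).mulVec (bellV θ b) =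
      ((α * Real.cos (2 * θ) + 2 * Real.cos μ + 2 * Real.sin μ * Real.sin (2 * θ) : ℝ) : ℂ) := by
  have hcos : Real.cos (2 * θ) = Real.cos θ ^ 2 - Real.sin θ ^ 2 := by
    rw [Real.cos_two_mul, ← Real.sin_sq_add_cos_sq θ]; ring
  have hpyth : (Real.sin θ : ℂ) ^ 2 + (Real.cos θ : ℂ) ^ 2 = 1 := by
    exact_mod_cast Real.sin_sq_add_cos_sq θ
  rw [hcos, Real.sin_two_mul]
  fin_cases b <;>
  · simp [Wop, Bobs, sZ, sX, bellV, dotProduct, Matrix.mulVec, Fintype.sum_prod_type,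
      Matrix.one_apply, -Complex.ofReal_cos, -Complex.ofReal_sin]
    linear_combination 2 * (Real.cos μ : ℂ) * hpyth

theorem tilted_bell_value_eq_sqrt {s c α : ℝ} (h : s ^ 2 + c ^ 2 = 1)
    (hα : α = 2 * c / √(1 + s ^ 2)) :
    α * c + 2 * Real.cos (Real.arctan s) + 2 * Real.sin (Real.arctan s) * s =
      √(8 + 2 * α ^ 2) := by
  have hpos : 0 < 1 + s ^ 2 := by positivity
  have hq : 0 < √(1 + s ^ 2) := Real.sqrt_pos.2 hpos
  have hsq : √(1 + s ^ 2) ^ 2 = 1 + s ^ 2 := Real.sq_sqrt hpos.le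
  have hrhs : 8 + 2 * α ^ 2 = (4 / √(1 + s ^ 2)) ^ 2 := by
    rw [hα]; field_simp; rw [hsq]; linear_combination 8 * h
  rw [hrhs, Real.sqrt_sq (by positivity), Real.cos_arctan, Real.sin_arctan, hα]
  field_simp
  linear_combination 2 * h

theorem stmt_3_general (θ μ α : ℝ)
    (hμ : μ = Real.arctan (Real.sin (2 * θ)))
    (hα : α = 2 * Real.cos (2 * θ) / Real.sqrt (1 + Real.sin (2 * θ) ^ 2)) :
    ∀ b : Fin 4,
      star (bellV θ b) ⬝ᵥ (Wop α μ b).mulVec (bellV θ b) =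
        (Real.sqrt (8 + 2 * α ^ 2) : ℂ) := by
  intro b
  rw [star_bellV_dotProduct_Wop_mulVec, hμ,
    tilted_bell_value_eq_sqrt (Real.sin_sq_add_cos_sq (2 * θ)) hα]

/-- each tilted Bell state achieves the value `√(8+2α²)` on its tilted
Bell operator: `⟨Bell^b_θ| W_b |Bell^b_θ⟩ = √(8+2α²)` for every `b ∈ {0,1,2,3}`. -/
theorem stmt_3 (θ μ α : ℝ) (hθ : θ ∈ Set.Ioc 0 (Real.pi / 4))
    (hμ : μ = Real.arctan (Real.sin (2 * θ)))
    (hα : α = 2 * Real.cos (2 * θ) / Real.sqrt (1 + Real.sin (2 * θ) ^ 2)) :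
    ∀ b : Fin 4,
      star (bellV θ b) ⬝ᵥ (Wop α μ b).mulVec (bellV θ b) =
        (Real.sqrt (8 + 2 * α ^ 2) : ℂ) :=
  stmt_3_general θ μ α hμ hα

end
end

section
/- Let θ ∈ (0, π/4], μ = arctan(sin 2θ), and α = 2cos(2θ)/√(1+sin²(2θ)). With the ideal observables A_0 = σ_Z, A_1 = σ_X on the first qubit and B_0 = cos(μ)σ_Z + sin(μ)σ_X, B_1 = cos(μ)σ_Z − sin(μ)σ_X on the second qubit, define the Bell operators W_0 = α A_0⊗I + A_0⊗B_0 + A_0⊗B_1 + A_1⊗B_0 − A_1⊗B_1, W_1 = −α A_0⊗I + A_0⊗B_0 + A_0⊗B_1 − A_1⊗B_0 + A_1⊗B_1, W_2 = −W_1, W_3 = −W_0, each a Hermitian 4×4 matrix. Then for every b ∈ {0,1,2,3}: √(8+2α²) is an eigenvalue of W_b with eigenvector |Bell^b_θ⟩, it is the largest eigenvalue of W_b, and the corresponding eigenspace is one-dimensional (the eigenvalue is nondegenerate). -/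
open scoped BigOperators Kronecker
open Matrix

noncomputable section

/-!
Put `R = √(1 + sin² 2θ)`. Then `cos μ = 1/R` and `sin μ = sin 2θ / R`, so `B_0 + B_1 = (2/R) σ_Z` and
`B_0 - B_1 = (2 sin 2θ / R) σ_X`, and a direct computation gives
`W_b = (4/R) (|Bell^b_θ⟩⟨Bell^b_θ| - |Bell^{3-b}_θ⟩⟨Bell^{3-b}_θ|)`.
For orthonormal `u, w` and `λ > 0`, the operator `λ (|u⟩⟨u| - |w⟩⟨w|)` has its eigenvalues in `{λ, 0, -λ}`
with `λ`-eigenspace spanned by `u`, and `√(8 + 2α²) = 4/R`.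
-/

section RankOneDiff

variable {n : Type*}

def rankOneDiff (u w : n → ℂ) : Matrix n n ℂ :=
  vecMulVec u (star u) - vecMulVec w (star w)

lemma isHermitian_rankOneDiff (u w : n → ℂ) : (rankOneDiff u w).IsHermitian := by
  simp only [IsHermitian, rankOneDiff, conjTranspose_sub, conjTranspose_vecMulVec, star_star]

lemma neg_rankOneDiff (u w : n → ℂ) : -rankOneDiff u w = rankOneDiff w u :=
  neg_sub _ _

variable [Fintype n]

lemma rankOneDiff_mulVec (u w v : n → ℂ) :
    rankOneDiff u w *ᵥ v = (star u ⬝ᵥ v) • u - (star w ⬝ᵥ v) • w := by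
  simp only [rankOneDiff, sub_mulVec, vecMulVec_mulVec, op_smul_eq_smul]

variable {u w : n → ℂ}

lemma star_dotProduct_rankOneDiff_mulVec_left (hu : star u ⬝ᵥ u = 1) (huw : star u ⬝ᵥ w = 0)
    (v : n → ℂ) : star u ⬝ᵥ (rankOneDiff u w *ᵥ v) = star u ⬝ᵥ v := by
  simp [rankOneDiff_mulVec, dotProduct_sub, hu, huw]

lemma star_dotProduct_rankOneDiff_mulVec_right (hw : star w ⬝ᵥ w = 1) (huw : star u ⬝ᵥ w = 0)
    (v : n → ℂ) : star w ⬝ᵥ (rankOneDiff u w *ᵥ v) = -(star w ⬝ᵥ v) := by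
  have hwu : star w ⬝ᵥ u = 0 := by rw [star_dotProduct, huw, star_zero]
  simp [rankOneDiff_mulVec, dotProduct_sub, hw, hwu]

lemma rankOneDiff_mulVec_left (hu : star u ⬝ᵥ u = 1) (huw : star u ⬝ᵥ w = 0) :
    rankOneDiff u w *ᵥ u = u := by
  have hwu : star w ⬝ᵥ u = 0 := by rw [star_dotProduct, huw, star_zero]
  simp [rankOneDiff_mulVec, hu, hwu]

lemma le_of_smul_rankOneDiff_mulVec_eq {lam t : ℝ} (hlam : 0 ≤ lam) (hu : star u ⬝ᵥ u = 1)
    (hw : star w ⬝ᵥ w = 1) (huw : star u ⬝ᵥ w = 0) {v : n → ℂ} (hv : v ≠ 0)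
    (hvt : ((lam : ℂ) • rankOneDiff u w) *ᵥ v = (t : ℂ) • v) : t ≤ lam := by
  by_contra! hlt
  rw [smul_mulVec] at hvt
  have hu_v : ((t : ℂ) - lam) * (star u ⬝ᵥ v) = 0 := by
    have := congrArg (star u ⬝ᵥ ·) hvt
    simp only [dotProduct_smul, star_dotProduct_rankOneDiff_mulVec_left hu huw, smul_eq_mul] at this
    linear_combination -this
  have hw_v : ((t : ℂ) + lam) * (star w ⬝ᵥ v) = 0 := by
    have := congrArg (star w ⬝ᵥ ·) hvt
    simp only [dotProduct_smul, star_dotProduct_rankOneDiff_mulVec_right hw huw, smul_eq_mul] at this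
    linear_combination -this
  have hu_v' : star u ⬝ᵥ v = 0 :=
    (mul_eq_zero.1 hu_v).resolve_left (sub_ne_zero.2 (by exact_mod_cast hlt.ne'))
  have hw_v' : star w ⬝ᵥ v = 0 :=
    (mul_eq_zero.1 hw_v).resolve_left (by exact_mod_cast (by linarith : t + lam ≠ 0))
  simp only [rankOneDiff_mulVec, hu_v', hw_v', zero_smul, sub_zero, smul_zero, eq_comm,
    smul_eq_zero] at hvt
  exact hvt.elim (fun ht ↦ by norm_cast at ht; linarith) hv

lemma exists_eq_smul_of_smul_rankOneDiff_mulVec_eq {lam : ℝ} (hlam : lam ≠ 0)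
    (hw : star w ⬝ᵥ w = 1) (huw : star u ⬝ᵥ w = 0) {v : n → ℂ}
    (hv : ((lam : ℂ) • rankOneDiff u w) *ᵥ v = (lam : ℂ) • v) : ∃ z : ℂ, v = z • u := by
  have hlamC : (lam : ℂ) ≠ 0 := by exact_mod_cast hlam
  rw [smul_mulVec] at hv
  have hDv : rankOneDiff u w *ᵥ v = v := smul_right_injective _ hlamC hv
  have hw_v : star w ⬝ᵥ v = 0 := by
    have := congrArg (star w ⬝ᵥ ·) hDv
    simp only [star_dotProduct_rankOneDiff_mulVec_right hw huw] at this
    linear_combination -this / 2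
  refine ⟨star u ⬝ᵥ v, ?_⟩
  calc v = rankOneDiff u w *ᵥ v := hDv.symm
    _ = (star u ⬝ᵥ v) • u := by rw [rankOneDiff_mulVec, hw_v, zero_smul, sub_zero]

end RankOneDiff

lemma star_bellV_dotProduct_self (θ : ℝ) (b : Fin 4) : star (bellV θ b) ⬝ᵥ bellV θ b = 1 := by
  have h : (Real.cos θ : ℂ) ^ 2 + (Real.sin θ : ℂ) ^ 2 = 1 := by exact_mod_cast Real.cos_sq_add_sin_sq θ
  fin_cases b <;>
    simp [dotProduct, Fintype.sum_prod_type, bellV, Complex.conj_ofReal, -Complex.ofReal_cos,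
      -Complex.ofReal_sin] <;>
    linear_combination h

lemma star_bellV_dotProduct_rev (θ : ℝ) (b : Fin 4) : star (bellV θ b) ⬝ᵥ bellV θ b.rev = 0 := by
  fin_cases b <;> simp [dotProduct, Fintype.sum_prod_type, bellV, Fin.rev]

lemma Wop_eq_smul_rankOneDiff (θ : ℝ) (b : Fin 4) :
    Wop (2 * Real.cos (2 * θ) / √(1 + Real.sin (2 * θ) ^ 2)) (Real.arctan (Real.sin (2 * θ))) b =
      ((4 / √(1 + Real.sin (2 * θ) ^ 2) : ℝ) : ℂ) • rankOneDiff (bellV θ b) (bellV θ b.rev) := by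
  set R := √(1 + Real.sin (2 * θ) ^ 2)
  set μ := Real.arctan (Real.sin (2 * θ))
  set α := 2 * Real.cos (2 * θ) / R with hα
  -- Writing `1 = cos² θ + sin² θ` turns every entry below into a polynomial identity.
  have hcos : Real.cos μ = (Real.cos θ ^ 2 + Real.sin θ ^ 2) / R := by
    rw [Real.cos_arctan, Real.cos_sq_add_sin_sq]
  have hsin : Real.sin μ = 2 * Real.sin θ * Real.cos θ / R := by
    rw [Real.sin_arctan, ← Real.sin_two_mul]
  rw [Real.cos_two_mul'] at hα
  have hW01 : ∀ b : Fin 4, b = 0 ∨ b = 1 →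
      Wop α μ b = ((4 / R : ℝ) : ℂ) • rankOneDiff (bellV θ b) (bellV θ b.rev) := by
    rintro b (rfl | rfl) <;> ext ⟨i, j⟩ ⟨k, l⟩ <;>
      fin_cases i <;> fin_cases j <;> fin_cases k <;> fin_cases l <;>
      simp [Wop, Bobs, sZ, sX, rankOneDiff, bellV, vecMulVec_apply, one_apply, hcos, hsin, hα,
        Complex.conj_ofReal, -Complex.ofReal_cos, -Complex.ofReal_sin, -Real.cos_sq_add_sin_sq] <;>
      ring
  obtain rfl | rfl | rfl | rfl : b = 0 ∨ b = 1 ∨ b = 2 ∨ b = 3 := by omega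
  · exact hW01 0 (.inl rfl)
  · exact hW01 1 (.inr rfl)
  · rw [show Wop α μ 2 = -Wop α μ 1 by simp [Wop], hW01 1 (.inr rfl), ← smul_neg, neg_rankOneDiff]
    rfl
  · rw [show Wop α μ 3 = -Wop α μ 0 by simp [Wop], hW01 0 (.inl rfl), ← smul_neg, neg_rankOneDiff]
    rfl

lemma sqrt_eight_add_two_mul_sq_eq (x : ℝ) :
    √(8 + 2 * (2 * Real.cos x / √(1 + Real.sin x ^ 2)) ^ 2) = 4 / √(1 + Real.sin x ^ 2) := by
  have hR : √(1 + Real.sin x ^ 2) ^ 2 = 1 + Real.sin x ^ 2 := Real.sq_sqrt (by positivity)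
  rw [← Real.sqrt_sq (by positivity : 0 ≤ 4 / √(1 + Real.sin x ^ 2))]
  congr 1
  field_simp
  rw [hR]
  linear_combination 8 * Real.sin_sq_add_cos_sq x

theorem stmt_4_general (θ μ α : ℝ)
    (hμ : μ = Real.arctan (Real.sin (2 * θ)))
    (hα : α = 2 * Real.cos (2 * θ) / Real.sqrt (1 + Real.sin (2 * θ) ^ 2)) :
    ∀ b : Fin 4,
      (Wop α μ b).IsHermitian ∧
      (Wop α μ b).mulVec (bellV θ b) =
        (Real.sqrt (8 + 2 * α ^ 2) : ℂ) • bellV θ b ∧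
      (∀ (t : ℝ) (v : Fin 2 × Fin 2 → ℂ), v ≠ 0 →
        (Wop α μ b).mulVec v = (t : ℂ) • v → t ≤ Real.sqrt (8 + 2 * α ^ 2)) ∧
      (∀ v : Fin 2 × Fin 2 → ℂ,
        (Wop α μ b).mulVec v = (Real.sqrt (8 + 2 * α ^ 2) : ℂ) • v →
          ∃ z : ℂ, v = z • bellV θ b) := by
  subst hμ hα
  intro b
  have hR : 0 < 4 / √(1 + Real.sin (2 * θ) ^ 2) := by positivity
  have hu := star_bellV_dotProduct_self θ b
  have hw := star_bellV_dotProduct_self θ b.rev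
  have huw := star_bellV_dotProduct_rev θ b
  rw [sqrt_eight_add_two_mul_sq_eq, Wop_eq_smul_rankOneDiff]
  refine ⟨(isHermitian_rankOneDiff _ _).smul (Complex.conj_ofReal _), ?_, ?_, ?_⟩
  · rw [smul_mulVec, rankOneDiff_mulVec_left hu huw]
  · exact fun t v hv ↦ le_of_smul_rankOneDiff_mulVec_eq hR.le hu hw huw hv
  · exact fun v ↦ exists_eq_smul_of_smul_rankOneDiff_mulVec_eq hR.ne' hw huw

/-- each `W_b` is Hermitian, `√(8+2α²)` is an eigenvalue of `W_b` with
eigenvector `|Bell^b_θ⟩`, it is the largest eigenvalue, and its eigenspace is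
one-dimensional (the eigenvalue is nondegenerate). -/
theorem stmt_4 (θ μ α : ℝ) (hθ : θ ∈ Set.Ioc 0 (Real.pi / 4))
    (hμ : μ = Real.arctan (Real.sin (2 * θ)))
    (hα : α = 2 * Real.cos (2 * θ) / Real.sqrt (1 + Real.sin (2 * θ) ^ 2)) :
    ∀ b : Fin 4,
      (Wop α μ b).IsHermitian ∧
      (Wop α μ b).mulVec (bellV θ b) =
        (Real.sqrt (8 + 2 * α ^ 2) : ℂ) • bellV θ b ∧
      (∀ (t : ℝ) (v : Fin 2 × Fin 2 → ℂ), v ≠ 0 →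
        (Wop α μ b).mulVec v = (t : ℂ) • v → t ≤ Real.sqrt (8 + 2 * α ^ 2)) ∧
      (∀ v : Fin 2 × Fin 2 → ℂ,
        (Wop α μ b).mulVec v = (Real.sqrt (8 + 2 * α ^ 2) : ℂ) • v →
          ∃ z : ℂ, v = z • bellV θ b) :=
  stmt_4_general θ μ α hμ hα

end
end

section
/- Let α ∈ [0, 2), let H_A and H_B be finite-dimensional complex Hilbert spaces, let A_0, A_1 be self-adjoint unitary operators on H_A and B_0, B_1 self-adjoint unitary operators on H_B. Then for every unit vector |ψ⟩ ∈ H_A⊗H_B, ⟨ψ| α A_0⊗I + A_0⊗B_0 + A_0⊗B_1 + A_1⊗B_0 − A_1⊗B_1 |ψ⟩ ≤ √(8+2α²). (The maximal quantum value of the tilted CHSH expression is √(8+2α²).) -/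
/-!
Sum of squares. Write the Bell operator as `M = A₀ ⊗ C + A₁ ⊗ D` with `C = α + B₀ + B₁` and
`D = B₀ - B₁`, and put `Q = A₀ ⊗ D + A₁ ⊗ E` with `E = B₀ + B₁ - α`. Since `B₀² = B₁² = 1`,
`CD = -DE` and `DC = -ED`, so the cross terms of `M² + Q²` cancel and `M² + Q² = (8 + 2α²) • 1 = β² • 1`.
Then `(β - M)² + Q² = 2β (β - M)`, so `β - M` is positive semidefinite.
-/

open scoped Kronecker ComplexOrder
open Matrix

section Involutions

variable {K R : Type*} [CommRing K] [Ring R] [Algebra K R] (c : K) {b₀ b₁ : R}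

theorem smul_one_add_add_mul_sub (h₀ : b₀ * b₀ = 1) (h₁ : b₁ * b₁ = 1) :
    (c • 1 + b₀ + b₁) * (b₀ - b₁) = -((b₀ - b₁) * (b₀ + b₁ - c • 1)) := by
  simp only [add_mul, mul_add, sub_mul, mul_sub, smul_mul_assoc, mul_smul_comm, one_mul, mul_one,
    h₀, h₁]
  module

theorem sub_mul_smul_one_add_add (h₀ : b₀ * b₀ = 1) (h₁ : b₁ * b₁ = 1) :
    (b₀ - b₁) * (c • 1 + b₀ + b₁) = -((b₀ + b₁ - c • 1) * (b₀ - b₁)) := by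
  simp only [add_mul, mul_add, sub_mul, mul_sub, smul_mul_assoc, mul_smul_comm, one_mul, mul_one,
    h₀, h₁]
  module

theorem sum_mul_self_of_mul_self_eq_one (h₀ : b₀ * b₀ = 1) (h₁ : b₁ * b₁ = 1) :
    (c • 1 + b₀ + b₁) * (c • 1 + b₀ + b₁) + (b₀ - b₁) * (b₀ - b₁) +
        ((b₀ - b₁) * (b₀ - b₁) + (b₀ + b₁ - c • 1) * (b₀ + b₁ - c • 1)) =
      (8 + 2 * c ^ 2) • 1 := by
  simp only [add_mul, mul_add, sub_mul, mul_sub, smul_mul_assoc, mul_smul_comm, one_mul, mul_one,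
    h₀, h₁]
  module

end Involutions

namespace Matrix

theorem kronecker_neg {l m n p R : Type*} [Mul R] [HasDistribNeg R] (A : Matrix l m R)
    (B : Matrix n p R) : A ⊗ₖ (-B) = -(A ⊗ₖ B) := by
  ext
  simp

theorem IsHermitian.kronecker {l m R : Type*} [CommSemiring R] [StarRing R]
    {A : Matrix l l R} {B : Matrix m m R} (hA : A.IsHermitian) (hB : B.IsHermitian) :
    (A ⊗ₖ B).IsHermitian :=
  (conjTranspose_kronecker A B).trans (by rw [hA.eq, hB.eq])

theorem kronecker_sum_of_squares {l m R : Type*} [Fintype l] [Fintype m] [DecidableEq l]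
    [CommRing R] {A₀ A₁ : Matrix l l R} {C D E : Matrix m m R} (hA₀ : A₀ * A₀ = 1)
    (hA₁ : A₁ * A₁ = 1) (hCD : C * D = -(D * E)) (hDC : D * C = -(E * D)) :
    (A₀ ⊗ₖ C + A₁ ⊗ₖ D) * (A₀ ⊗ₖ C + A₁ ⊗ₖ D) + (A₀ ⊗ₖ D + A₁ ⊗ₖ E) * (A₀ ⊗ₖ D + A₁ ⊗ₖ E) =
      1 ⊗ₖ (C * C + D * D + (D * D + E * E)) := by
  simp only [add_mul, mul_add, ← mul_kronecker_mul, hA₀, hA₁, hCD, hDC, kronecker_add,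
    kronecker_neg]
  abel

theorem posSemidef_smul_one_sub_of_mul_self_add_mul_self {𝕜 ι : Type*} [RCLike 𝕜] [Fintype ι]
    [DecidableEq ι] {M Q : Matrix ι ι 𝕜} (hM : M.IsHermitian) (hQ : Q.IsHermitian) {β : ℝ}
    (hβ : 0 < β) (h : M * M + Q * Q = ((β ^ 2 : ℝ) : 𝕜) • 1) :
    ((β : 𝕜) • 1 - M).PosSemidef := by
  set N := (β : 𝕜) • 1 - M
  have hN : N.IsHermitian := (isHermitian_one.smul (RCLike.conj_ofReal β)).sub hM
  have hsos : Nᴴ * N + Qᴴ * Q = ((2 * β : ℝ) : 𝕜) • N := by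
    rw [hN.eq, hQ.eq, ← sub_eq_zero]
    have : N * N + Q * Q - ((2 * β : ℝ) : 𝕜) • N = M * M + Q * Q - ((β ^ 2 : ℝ) : 𝕜) • 1 := by
      simp only [N, sub_mul, mul_sub, smul_mul_assoc, mul_smul_comm, one_mul, mul_one]
      push_cast
      module
    rw [this, h, sub_self]
  have h2β : (0 : 𝕜) ≤ ((2 * β)⁻¹ : ℝ) := RCLike.ofReal_nonneg.mpr (by positivity)
  have := ((posSemidef_conjTranspose_mul_self N).add
    (posSemidef_conjTranspose_mul_self Q)).smul h2β
  rwa [hsos, smul_smul, ← RCLike.ofReal_mul, inv_mul_cancel₀ (by positivity), RCLike.ofReal_one,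
    one_smul] at this

theorem dotProduct_mulVec_le_of_posSemidef {𝕜 ι : Type*} [RCLike 𝕜] [Fintype ι] [DecidableEq ι]
    {M : Matrix ι ι 𝕜} {β : 𝕜} (h : (β • 1 - M).PosSemidef) {ψ : ι → 𝕜}
    (hψ : star ψ ⬝ᵥ ψ = 1) : star ψ ⬝ᵥ (M *ᵥ ψ) ≤ β := by
  have := h.dotProduct_mulVec_nonneg ψ
  rwa [sub_mulVec, dotProduct_sub, smul_mulVec, one_mulVec, dotProduct_smul, hψ, smul_eq_mul,
    mul_one, sub_nonneg] at this

end Matrix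

theorem stmt_5_general (α : ℝ) (m n : ℕ)
    (A : Fin 2 → Matrix (Fin m) (Fin m) ℂ) (B : Fin 2 → Matrix (Fin n) (Fin n) ℂ)
    (hAherm : ∀ a, (A a).IsHermitian) (hAunit : ∀ a, A a * A a = 1)
    (hBherm : ∀ b, (B b).IsHermitian) (hBunit : ∀ b, B b * B b = 1)
    (ψ : Fin m × Fin n → ℂ) (hψ : star ψ ⬝ᵥ ψ = 1) :
    star ψ ⬝ᵥ
        ((α : ℂ) • (A 0 ⊗ₖ (1 : Matrix (Fin n) (Fin n) ℂ)) +
          A 0 ⊗ₖ B 0 + A 0 ⊗ₖ B 1 + A 1 ⊗ₖ B 0 - A 1 ⊗ₖ B 1).mulVec ψ ≤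
      (Real.sqrt (8 + 2 * α ^ 2) : ℂ) := by
  set C : Matrix (Fin n) (Fin n) ℂ := (α : ℂ) • 1 + B 0 + B 1
  set D : Matrix (Fin n) (Fin n) ℂ := B 0 - B 1
  set E : Matrix (Fin n) (Fin n) ℂ := B 0 + B 1 - (α : ℂ) • 1
  have hα : IsSelfAdjoint (α : ℂ) := Complex.conj_ofReal α
  have hC : C.IsHermitian := ((isHermitian_one.smul hα).add (hBherm 0)).add (hBherm 1)
  have hD : D.IsHermitian := (hBherm 0).sub (hBherm 1)
  have hE : E.IsHermitian := ((hBherm 0).add (hBherm 1)).sub (isHermitian_one.smul hα)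
  have hsplit : (α : ℂ) • (A 0 ⊗ₖ (1 : Matrix (Fin n) (Fin n) ℂ)) + A 0 ⊗ₖ B 0 + A 0 ⊗ₖ B 1 +
      A 1 ⊗ₖ B 0 - A 1 ⊗ₖ B 1 = A 0 ⊗ₖ C + A 1 ⊗ₖ D := by
    simp only [C, D, sub_eq_add_neg, kronecker_add, kronecker_neg, kronecker_smul]
    abel
  have hsos : (A 0 ⊗ₖ C + A 1 ⊗ₖ D) * (A 0 ⊗ₖ C + A 1 ⊗ₖ D) +
      (A 0 ⊗ₖ D + A 1 ⊗ₖ E) * (A 0 ⊗ₖ D + A 1 ⊗ₖ E) =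
      ((Real.sqrt (8 + 2 * α ^ 2) ^ 2 : ℝ) : ℂ) • 1 := by
    rw [kronecker_sum_of_squares (hAunit 0) (hAunit 1)
      (smul_one_add_add_mul_sub _ (hBunit 0) (hBunit 1))
      (sub_mul_smul_one_add_add _ (hBunit 0) (hBunit 1)),
      sum_mul_self_of_mul_self_eq_one _ (hBunit 0) (hBunit 1), Real.sq_sqrt (by positivity),
      kronecker_smul, one_kronecker_one]
    push_cast
    rfl
  rw [hsplit]
  exact dotProduct_mulVec_le_of_posSemidef
    (posSemidef_smul_one_sub_of_mul_self_add_mul_self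
      (((hAherm 0).kronecker hC).add ((hAherm 1).kronecker hD))
      (((hAherm 0).kronecker hD).add ((hAherm 1).kronecker hE))
      (Real.sqrt_pos.2 (by positivity)) hsos) hψ

/-- the tilted-CHSH Tsirelson bound: for any dichotomic (self-adjoint
unitary) observables `A_0, A_1` on `H_A` and `B_0, B_1` on `H_B` and any unit vector
`|ψ⟩ ∈ H_A ⊗ H_B`,
`⟨ψ| α A_0⊗I + A_0⊗B_0 + A_0⊗B_1 + A_1⊗B_0 - A_1⊗B_1 |ψ⟩ ≤ √(8+2α²)` for `α ∈ [0,2)`. -/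
theorem stmt_5 (α : ℝ) (hα : 0 ≤ α) (hα2 : α < 2) (m n : ℕ)
    (A : Fin 2 → Matrix (Fin m) (Fin m) ℂ) (B : Fin 2 → Matrix (Fin n) (Fin n) ℂ)
    (hAherm : ∀ a, (A a).IsHermitian) (hAunit : ∀ a, A a * A a = 1)
    (hBherm : ∀ b, (B b).IsHermitian) (hBunit : ∀ b, B b * B b = 1)
    (ψ : Fin m × Fin n → ℂ) (hψ : star ψ ⬝ᵥ ψ = 1) :
    star ψ ⬝ᵥ
        ((α : ℂ) • (A 0 ⊗ₖ (1 : Matrix (Fin n) (Fin n) ℂ)) +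
          A 0 ⊗ₖ B 0 + A 0 ⊗ₖ B 1 + A 1 ⊗ₖ B 0 - A 1 ⊗ₖ B 1).mulVec ψ ≤
      (Real.sqrt (8 + 2 * α ^ 2) : ℂ) :=
  stmt_5_general α m n A B hAherm hAunit hBherm hBunit ψ hψ
end

section
/- Let θ ∈ (0, π/4], μ = arctan(sin 2θ), and α = 2cos(2θ)/√(1+sin²(2θ)). With the ideal observables A_0 = σ_Z, A_1 = σ_X on the first qubit and B_0 = cos(μ)σ_Z + sin(μ)σ_X, B_1 = cos(μ)σ_Z − sin(μ)σ_X on the second qubit, the state |Φ⟩ = cosθ|00⟩ − sinθ|11⟩ = (σ_Z⊗I)|Bell⁰_θ⟩ satisfies ⟨Φ| α A_0⊗I + A_0⊗B_0 + A_0⊗B_1 − A_1⊗B_0 + A_1⊗B_1 |Φ⟩ = √(8+2α²). -/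
open scoped BigOperators Kronecker
open Matrix

noncomputable section

/-- `|Bell⁰_θ⟩ = cos θ |00⟩ + sin θ |11⟩`. -/
def bell0 (θ : ℝ) : Fin 2 × Fin 2 → ℂ :=
  fun p => if p = (0, 0) then (Real.cos θ : ℂ) else if p = (1, 1) then (Real.sin θ : ℂ) else 0

/-- `|Φ⟩ = cos θ |00⟩ - sin θ |11⟩`. -/
def PhiV (θ : ℝ) : Fin 2 × Fin 2 → ℂ :=
  fun p => if p = (0, 0) then (Real.cos θ : ℂ) else if p = (1, 1) then -(Real.sin θ : ℂ) else 0

/-! Since `B₀ + B₁ = 2 cos μ σ_Z` and `B₁ - B₀ = -2 sin μ σ_X`, the operator is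
`α σ_Z⊗I + 2 cos μ σ_Z⊗σ_Z - 2 sin μ σ_X⊗σ_X`, whose expectations in `|Φ⟩` are `cos 2θ`, `1` and
`-sin 2θ`. With `s = sin 2θ` and `tan μ = s` the value is
`α cos 2θ + 2√(1+s²) = 4/√(1+s²) = √(8+2α²)`. -/

lemma PhiV_eq_sZ_kron_one_mulVec_bell0 (θ : ℝ) :
    PhiV θ = (sZ ⊗ₖ (1 : Matrix (Fin 2) (Fin 2) ℂ)) *ᵥ bell0 θ := by
  ext ⟨i, j⟩
  fin_cases i <;> fin_cases j <;>
    simp [PhiV, bell0, sZ, mulVec, dotProduct, Fintype.sum_prod_type, kroneckerMap_apply,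
      one_apply]

lemma star_PhiV_dotProduct_mulVec (θ : ℝ) (M : Matrix (Fin 2 × Fin 2) (Fin 2 × Fin 2) ℂ) :
    star (PhiV θ) ⬝ᵥ M *ᵥ PhiV θ =
      (Real.cos θ : ℂ) ^ 2 * M (0, 0) (0, 0) + (Real.sin θ : ℂ) ^ 2 * M (1, 1) (1, 1)
        - (Real.cos θ : ℂ) * Real.sin θ * (M (0, 0) (1, 1) + M (1, 1) (0, 0)) := by
  simp [PhiV, dotProduct, mulVec, Fintype.sum_prod_type, Prod.ext_iff, -Complex.ofReal_cos,
    -Complex.ofReal_sin, Complex.conj_ofReal]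
  ring

lemma star_PhiV_dotProduct_sZ_kron_one_mulVec (θ : ℝ) :
    star (PhiV θ) ⬝ᵥ (sZ ⊗ₖ (1 : Matrix (Fin 2) (Fin 2) ℂ)) *ᵥ PhiV θ = Real.cos (2 * θ) := by
  rw [star_PhiV_dotProduct_mulVec, Real.cos_two_mul']
  simp [sZ, kroneckerMap_apply]
  ring

lemma star_PhiV_dotProduct_sZ_kron_sZ_mulVec (θ : ℝ) :
    star (PhiV θ) ⬝ᵥ (sZ ⊗ₖ sZ) *ᵥ PhiV θ = 1 := by
  rw [star_PhiV_dotProduct_mulVec]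
  simp [sZ, kroneckerMap_apply]

lemma star_PhiV_dotProduct_sX_kron_sX_mulVec (θ : ℝ) :
    star (PhiV θ) ⬝ᵥ (sX ⊗ₖ sX) *ᵥ PhiV θ = -Real.sin (2 * θ) := by
  rw [star_PhiV_dotProduct_mulVec, Real.sin_two_mul]
  simp [sX, kroneckerMap_apply]
  ring

lemma sZ_kron_Bobs_zero_add_sZ_kron_Bobs_one (μ : ℝ) :
    sZ ⊗ₖ Bobs μ 0 + sZ ⊗ₖ Bobs μ 1 = (2 * Real.cos μ : ℂ) • (sZ ⊗ₖ sZ) := by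
  ext ⟨i, j⟩ ⟨k, l⟩
  simp [Bobs, kroneckerMap_apply]
  ring

lemma sX_kron_Bobs_one_sub_sX_kron_Bobs_zero (μ : ℝ) :
    sX ⊗ₖ Bobs μ 1 - sX ⊗ₖ Bobs μ 0 = (-2 * Real.sin μ : ℂ) • (sX ⊗ₖ sX) := by
  ext ⟨i, j⟩ ⟨k, l⟩
  simp [Bobs, kroneckerMap_apply]
  ring

lemma star_PhiV_dotProduct_tiltedCHSH_mulVec (θ μ α : ℝ) :
    star (PhiV θ) ⬝ᵥ
        ((α : ℂ) • (sZ ⊗ₖ (1 : Matrix (Fin 2) (Fin 2) ℂ)) +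
          sZ ⊗ₖ Bobs μ 0 + sZ ⊗ₖ Bobs μ 1 - sX ⊗ₖ Bobs μ 0 + sX ⊗ₖ Bobs μ 1) *ᵥ PhiV θ =
      ((α * Real.cos (2 * θ) + 2 * Real.cos μ + 2 * Real.sin μ * Real.sin (2 * θ) : ℝ) : ℂ) := by
  have hop : (α : ℂ) • (sZ ⊗ₖ (1 : Matrix (Fin 2) (Fin 2) ℂ)) +
      sZ ⊗ₖ Bobs μ 0 + sZ ⊗ₖ Bobs μ 1 - sX ⊗ₖ Bobs μ 0 + sX ⊗ₖ Bobs μ 1 =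
      (α : ℂ) • (sZ ⊗ₖ 1) + (sZ ⊗ₖ Bobs μ 0 + sZ ⊗ₖ Bobs μ 1)
        + (sX ⊗ₖ Bobs μ 1 - sX ⊗ₖ Bobs μ 0) := by
    abel
  rw [hop, sZ_kron_Bobs_zero_add_sZ_kron_Bobs_one, sX_kron_Bobs_one_sub_sX_kron_Bobs_zero]
  simp only [add_mulVec, smul_mulVec, dotProduct_add, dotProduct_smul, smul_eq_mul,
    star_PhiV_dotProduct_sZ_kron_one_mulVec, star_PhiV_dotProduct_sZ_kron_sZ_mulVec,
    star_PhiV_dotProduct_sX_kron_sX_mulVec]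
  push_cast
  ring

lemma cos_arctan_add_sin_arctan_mul_self (s : ℝ) :
    Real.cos (Real.arctan s) + Real.sin (Real.arctan s) * s = Real.sqrt (1 + s ^ 2) := by
  have hS : 0 < Real.sqrt (1 + s ^ 2) := by positivity
  rw [Real.cos_arctan, Real.sin_arctan]
  field_simp
  rw [Real.sq_sqrt (by positivity)]

lemma two_mul_div_sqrt_mul_add_two_mul_sqrt {c s : ℝ} (h : c ^ 2 + s ^ 2 = 1) :
    2 * c / Real.sqrt (1 + s ^ 2) * c + 2 * Real.sqrt (1 + s ^ 2) =
      Real.sqrt (8 + 2 * (2 * c / Real.sqrt (1 + s ^ 2)) ^ 2) := by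
  set S := Real.sqrt (1 + s ^ 2)
  have hS : 0 < S := by positivity
  have hS2 : S ^ 2 = 1 + s ^ 2 := Real.sq_sqrt (by positivity)
  have hlhs : 2 * c / S * c + 2 * S = 4 / S := by
    field_simp
    linear_combination 2 * hS2 + 2 * h
  have hrhs : 8 + 2 * (2 * c / S) ^ 2 = (4 / S) ^ 2 := by
    field_simp
    linear_combination 8 * hS2 + 8 * h
  rw [hlhs, hrhs, Real.sqrt_sq (by positivity)]

theorem stmt_6_general (θ μ α : ℝ)
    (hμ : μ = Real.arctan (Real.sin (2 * θ)))
    (hα : α = 2 * Real.cos (2 * θ) / Real.sqrt (1 + Real.sin (2 * θ) ^ 2)) :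
    PhiV θ = (sZ ⊗ₖ (1 : Matrix (Fin 2) (Fin 2) ℂ)).mulVec (bell0 θ) ∧
    star (PhiV θ) ⬝ᵥ
        ((α : ℂ) • (sZ ⊗ₖ (1 : Matrix (Fin 2) (Fin 2) ℂ)) +
          sZ ⊗ₖ Bobs μ 0 + sZ ⊗ₖ Bobs μ 1 - sX ⊗ₖ Bobs μ 0 + sX ⊗ₖ Bobs μ 1).mulVec
        (PhiV θ) =
      (Real.sqrt (8 + 2 * α ^ 2) : ℂ) := by
  refine ⟨PhiV_eq_sZ_kron_one_mulVec_bell0 θ, ?_⟩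
  rw [star_PhiV_dotProduct_tiltedCHSH_mulVec, hα,
    ← two_mul_div_sqrt_mul_add_two_mul_sqrt (Real.cos_sq_add_sin_sq (2 * θ)), hμ,
    ← cos_arctan_add_sin_arctan_mul_self]
  congr 1
  ring

/-- with `A_0 = σ_Z`, `A_1 = σ_X`, the state
`|Φ⟩ = cos θ|00⟩ - sin θ|11⟩ = (σ_Z ⊗ I)|Bell⁰_θ⟩` maximally violates the corresponding
tilted CHSH expression:
`⟨Φ| α A_0⊗I + A_0⊗B_0 + A_0⊗B_1 - A_1⊗B_0 + A_1⊗B_1 |Φ⟩ = √(8+2α²)`. -/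
theorem stmt_6 (θ μ α : ℝ) (hθ : θ ∈ Set.Ioc 0 (Real.pi / 4))
    (hμ : μ = Real.arctan (Real.sin (2 * θ)))
    (hα : α = 2 * Real.cos (2 * θ) / Real.sqrt (1 + Real.sin (2 * θ) ^ 2)) :
    PhiV θ = (sZ ⊗ₖ (1 : Matrix (Fin 2) (Fin 2) ℂ)).mulVec (bell0 θ) ∧
    star (PhiV θ) ⬝ᵥ
        ((α : ℂ) • (sZ ⊗ₖ (1 : Matrix (Fin 2) (Fin 2) ℂ)) +
          sZ ⊗ₖ Bobs μ 0 + sZ ⊗ₖ Bobs μ 1 - sX ⊗ₖ Bobs μ 0 + sX ⊗ₖ Bobs μ 1).mulVec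
        (PhiV θ) =
      (Real.sqrt (8 + 2 * α ^ 2) : ℂ) :=
  stmt_6_general θ μ α hμ hα

end
end
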